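/- If all per-step losses L_t are nonnegative and the sequence is nondecreasing in t, then the normalized discounted sum (1-γ) ∑_{t=1}^∞ L_t γ^t is nondecreasing as a function of γ on (0,1). -/
import Mathlib


/-- If all per-step losses are nonnegative, bounded, and nondecreasing in `t`, then the
normalized discounted sum `(1-γ) ∑_{t=1}^∞ L t γ^t` is nondecreasing as a function of
`γ` on `(0,1)`. -/
theorem normalized_discounted_sum_monotone (M : ℝ) (L : ℕ → ℝ)
    (hpos : ∀ t, 0 ≤ L t) (hbd : ∀ t, L t ≤ M) (hmono : ∀ t, L t ≤ L (t + 1)) :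
    ∀ γ₁ ∈ Set.Ioo (0:ℝ) 1, ∀ γ₂ ∈ Set.Ioo (0:ℝ) 1, γ₁ ≤ γ₂ →
      (1 - γ₁) * ∑' t : ℕ, L (t + 1) * γ₁ ^ (t + 1) ≤
      (1 - γ₂) * ∑' t : ℕ, L (t + 1) * γ₂ ^ (t + 1) := by
  set b : ℕ → ℝ := fun k => L (k + 1) - (if k = 0 then 0 else L k) with hb
  have hbnn : ∀ k, 0 ≤ b k := by
    intro k
    simp only [hb]
    cases k with
    | zero => simpa using hpos 1
    | succ n => simp [sub_nonneg, hmono (n+1)]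
  -- generic summability
  have hsum : ∀ γ ∈ Set.Ioo (0:ℝ) 1, ∀ g : ℕ → ℝ, (∀ k, 0 ≤ g k) → (∀ k, g k ≤ M) →
      Summable (fun k : ℕ => g k * γ ^ (k + 1)) := by
    intro γ hγ g hg hgM
    have hγ0 : (0:ℝ) ≤ γ := le_of_lt hγ.1
    have hgeo : Summable (fun k : ℕ => M * γ ^ (k + 1)) := by
      have : Summable (fun k : ℕ => γ ^ k) :=
        summable_geometric_of_lt_one hγ0 hγ.2
      simpa [pow_succ, mul_comm, mul_assoc, mul_left_comm] using
        ((this.mul_left M).mul_left γ)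
    refine Summable.of_nonneg_of_le (fun k => ?_) (fun k => ?_) hgeo
    · exact mul_nonneg (hg k) (pow_nonneg hγ0 _)
    · exact mul_le_mul_of_nonneg_right (hgM k) (pow_nonneg hγ0 _)
  have hLnn : ∀ k : ℕ, 0 ≤ L (k + 1) := fun k => hpos _
  have hLM : ∀ k : ℕ, L (k + 1) ≤ M := fun k => hbd _
  have hcnn : ∀ k : ℕ, (0:ℝ) ≤ (if k = 0 then 0 else L k) := by
    intro k; split <;> simp [hpos]
  have hcM : ∀ k : ℕ, (if k = 0 then (0:ℝ) else L k) ≤ M := by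
    intro k; split
    · exact le_trans (hpos 0) (hbd 0)
    · exact hbd k
  -- key identity
  have key : ∀ γ ∈ Set.Ioo (0:ℝ) 1,
      (1 - γ) * ∑' t : ℕ, L (t + 1) * γ ^ (t + 1) = ∑' t : ℕ, b t * γ ^ (t + 1) := by
    intro γ hγ
    have hf : Summable (fun k : ℕ => L (k + 1) * γ ^ (k + 1)) :=
      hsum γ hγ _ hLnn hLM
    have hc : Summable (fun k : ℕ => (if k = 0 then (0:ℝ) else L k) * γ ^ (k + 1)) :=
      hsum γ hγ _ hcnn hcM
    have hshift : ∑' k : ℕ, (if k = 0 then (0:ℝ) else L k) * γ ^ (k + 1)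
        = γ * ∑' k : ℕ, L (k + 1) * γ ^ (k + 1) := by
      rw [Summable.tsum_eq_zero_add hc, ← tsum_mul_left]
      simp only [if_neg (Nat.succ_ne_zero _)]
      rw [show ((0:ℝ) = 0) from rfl]
      have : ∀ k : ℕ, L (k + 1) * γ ^ (k + 1 + 1) = γ * (L (k + 1) * γ ^ (k + 1)) := by
        intro k; ring
      rw [tsum_congr this]
      simp
    have hdiff : ∑' t : ℕ, b t * γ ^ (t + 1)
        = (∑' t : ℕ, L (t + 1) * γ ^ (t + 1))
          - ∑' t : ℕ, (if t = 0 then (0:ℝ) else L t) * γ ^ (t + 1) := by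
      rw [← Summable.tsum_sub hf hc]
      congr 1; funext t; simp [hb, sub_mul]
    rw [hdiff, hshift]; ring
  intro γ₁ hγ₁ γ₂ hγ₂ hle
  rw [key γ₁ hγ₁, key γ₂ hγ₂]
  have hb1 : Summable (fun k : ℕ => b k * γ₁ ^ (k + 1)) := by
    have h1 := hsum γ₁ hγ₁ _ hLnn hLM
    have h2 := hsum γ₁ hγ₁ _ hcnn hcM
    have := h1.sub h2
    refine this.congr fun t => ?_
    simp [hb, sub_mul]
  have hb2 : Summable (fun k : ℕ => b k * γ₂ ^ (k + 1)) := by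
    have h1 := hsum γ₂ hγ₂ _ hLnn hLM
    have h2 := hsum γ₂ hγ₂ _ hcnn hcM
    have := h1.sub h2
    refine this.congr fun t => ?_
    simp [hb, sub_mul]
  refine Summable.tsum_le_tsum (fun k => ?_) hb1 hb2
  exact mul_le_mul_of_nonneg_left (pow_le_pow_left₀ (le_of_lt hγ₁.1) hle _) (hbnn k)
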